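/- arXiv:1002.0368 — 7 statements merged into one kernel-verified Lean document; each statement's English description precedes it below -/
import Mathlib

section
/- Let H_S be an n×n complex Hermitian matrix, H_P an m×m complex Hermitian matrix having at least two distinct eigenvalues with least eigenvalue p0 and second-smallest distinct eigenvalue p1, Π the orthogonal projection onto the p0-eigenspace of H_P, and A an n×n Hermitian matrix with A·H_S = H_S·A whose least eigenvalue a_min satisfies a_min + p1 − p0 > 0. Set H1 = H_S ⊗ I_m + I_n ⊗ H_P and H2 = H1 + A ⊗ (I_m − Π) (Kronecker products). Then for any vector ψ in ℂ^(nm): ψ is an eigenvector of H1 with eigenvalue equal to the least eigenvalue of H1 if and only if ψ is an eigenvector of H2 with eigenvalue equal to the least eigenvalue of H2. -/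
open Matrix Kronecker

/-- `μ` is an eigenvalue of the complex square matrix `M`. -/
def IsEigenvalue {K : Type*} [Fintype K] (M : Matrix K K ℂ) (μ : ℝ) : Prop :=
  ∃ v : K → ℂ, v ≠ 0 ∧ M.mulVec v = (μ : ℂ) • v

/-- `μ` is the least (real) eigenvalue of the complex square matrix `M`. -/
def IsLeastEigenvalue {K : Type*} [Fintype K] (M : Matrix K K ℂ) (μ : ℝ) : Prop :=
  IsEigenvalue M μ ∧ ∀ ν : ℝ, IsEigenvalue M ν → μ ≤ ν

/-!
Let `Q = 1 - Π` and `s₀ = λmin(H_S)`. Since `H_P + (p₁ - p₀) Π ≥ p₁`, in the Loewner order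
`H1 ≥ (s₀ + p₀) + (p₁ - p₀) (I ⊗ Q)`, and since `A ⊗ Q ≥ a_min (I ⊗ Q)`,
`H2 ≥ (s₀ + p₀) + (a_min + p₁ - p₀) (I ⊗ Q)`; both gaps are positive. A product of ground states
of `H_S` and `H_P` is an eigenvector of both `H1` and `H2` with eigenvalue `s₀ + p₀`, so this is
the least eigenvalue of each, and every ground state `ψ` of either one satisfies `(I ⊗ Q) ψ = 0`.
On such `ψ` the perturbation `A ⊗ Q = (A ⊗ I)(I ⊗ Q)` vanishes, so `H1 ψ = H2 ψ`.
-/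

open scoped MatrixOrder ComplexOrder

section KroneckerAlgebra

variable {ι κ : Type*} [Fintype ι] [Fintype κ]

theorem IsStarProjection.kronecker {R : Type*} [CommSemiring R] [StarRing R]
    {P : Matrix ι ι R} {Q : Matrix κ κ R}
    (hP : IsStarProjection P) (hQ : IsStarProjection Q) : IsStarProjection (P ⊗ₖ Q) where
  isIdempotentElem := by
    rw [IsIdempotentElem, ← mul_kronecker_mul, hP.isIdempotentElem.eq, hQ.isIdempotentElem.eq]
  isSelfAdjoint := by
    rw [IsSelfAdjoint, star_eq_conjTranspose, conjTranspose_kronecker, ← star_eq_conjTranspose,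
      ← star_eq_conjTranspose, hP.isSelfAdjoint.star_eq, hQ.isSelfAdjoint.star_eq]

theorem Matrix.kronecker_mulVec_mul {R : Type*} [CommSemiring R] (A : Matrix ι ι R)
    (B : Matrix κ κ R) (x : ι → R) (y : κ → R) :
    (A ⊗ₖ B) *ᵥ (fun p => x p.1 * y p.2) = fun p => (A *ᵥ x) p.1 * (B *ᵥ y) p.2 := by
  ext ⟨i, j⟩
  simp only [mulVec, dotProduct, kroneckerMap_apply, Fintype.sum_prod_type, Finset.sum_mul_sum]
  exact Finset.sum_congr rfl fun _ _ => Finset.sum_congr rfl fun _ _ => by ring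

end KroneckerAlgebra

section KroneckerOrder

variable {𝕜 ι κ : Type*} [RCLike 𝕜] [Fintype ι] [Fintype κ]

theorem Matrix.kronecker_le_kronecker_left {A A' : Matrix ι ι 𝕜} {B : Matrix κ κ 𝕜}
    (hA : A ≤ A') (hB : 0 ≤ B) : A ⊗ₖ B ≤ A' ⊗ₖ B := by
  rw [le_iff, sub_eq_of_eq_add (by rw [← add_kronecker, sub_add_cancel] :
    A' ⊗ₖ B = (A' - A) ⊗ₖ B + A ⊗ₖ B)]
  exact (le_iff.1 hA).kronecker hB.posSemidef

theorem Matrix.kronecker_le_kronecker_right {A : Matrix ι ι 𝕜} {B B' : Matrix κ κ 𝕜}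
    (hA : 0 ≤ A) (hB : B ≤ B') : A ⊗ₖ B ≤ A ⊗ₖ B' := by
  rw [le_iff, sub_eq_of_eq_add (by rw [← kronecker_add, sub_add_cancel] :
    A ⊗ₖ B' = A ⊗ₖ (B' - B) + A ⊗ₖ B)]
  exact hA.posSemidef.kronecker (le_iff.1 hB)

theorem Matrix.algebraMap_add_one_kronecker_le [DecidableEq ι] [DecidableEq κ]
    {A : Matrix ι ι 𝕜} {B X : Matrix κ κ 𝕜} {a b c : ℝ} (hA : algebraMap ℝ _ a ≤ A)
    (hB : algebraMap ℝ _ b + c • X ≤ B) :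
    algebraMap ℝ _ (a + b) + c • (1 ⊗ₖ X) ≤ A ⊗ₖ 1 + 1 ⊗ₖ B := by
  convert add_le_add (kronecker_le_kronecker_left hA PosSemidef.one.nonneg)
    (kronecker_le_kronecker_right PosSemidef.one.nonneg hB) using 1
  simp only [Algebra.algebraMap_eq_smul_one, smul_kronecker, kronecker_smul, kronecker_add,
    one_kronecker_one, add_smul, add_assoc]

end KroneckerOrder

section Eigenvalues

variable {ι κ : Type*} [Fintype ι] [DecidableEq ι] [Fintype κ] [DecidableEq κ]
  {M : Matrix ι ι ℂ}

theorem Matrix.algebraMap_mulVec (r : ℝ) (v : ι → ℂ) :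
    algebraMap ℝ (Matrix ι ι ℂ) r *ᵥ v = (r : ℂ) • v := by
  rw [Algebra.algebraMap_eq_smul_one, smul_mulVec, one_mulVec, Complex.coe_smul]

theorem isEigenvalue_of_mem_spectrum {ν : ℝ} (h : ν ∈ spectrum ℝ M) : IsEigenvalue M ν := by
  rw [spectrum.mem_iff, isUnit_iff_isUnit_det, isUnit_iff_ne_zero, not_not,
    ← exists_mulVec_eq_zero_iff] at h
  obtain ⟨v, hv, hMv⟩ := h
  rw [sub_mulVec, Matrix.algebraMap_mulVec, sub_eq_zero] at hMv
  exact ⟨v, hv, hMv.symm⟩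

theorem IsEigenvalue.le_of_algebraMap_le {μ ν : ℝ} (hν : IsEigenvalue M ν)
    (hle : algebraMap ℝ _ μ ≤ M) : μ ≤ ν := by
  obtain ⟨v, hv, hMv⟩ := hν
  have hform := (Matrix.le_iff.1 hle).dotProduct_mulVec_nonneg v
  rw [sub_mulVec, hMv, Matrix.algebraMap_mulVec, ← sub_smul, dotProduct_smul, smul_eq_mul,
    ← Complex.ofReal_sub] at hform
  have hpos : 0 < star v ⬝ᵥ v := dotProduct_star_self_pos_iff.2 hv
  have hdiv := div_nonneg hform hpos.le
  rw [mul_div_cancel_right₀ _ hpos.ne'] at hdiv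
  exact sub_nonneg.1 (Complex.zero_le_real.1 hdiv)

theorem Matrix.IsHermitian.algebraMap_le_iff {μ : ℝ} (hM : M.IsHermitian) :
    algebraMap ℝ _ μ ≤ M ↔ ∀ ν, IsEigenvalue M ν → μ ≤ ν :=
  ⟨fun hle _ hν => hν.le_of_algebraMap_le hle, fun h =>
    (algebraMap_le_iff_le_spectrum hM.isSelfAdjoint).2 fun ν hν =>
      h ν (isEigenvalue_of_mem_spectrum hν)⟩

theorem Matrix.IsHermitian.exists_isLeastEigenvalue [Nonempty ι] (hM : M.IsHermitian) :
    ∃ μ, IsLeastEigenvalue M μ := by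
  obtain ⟨i, hi⟩ := Finite.exists_min hM.eigenvalues
  refine ⟨hM.eigenvalues i, isEigenvalue_of_mem_spectrum (hM.eigenvalues_mem_spectrum_real i),
    hM.algebraMap_le_iff.1 ?_⟩
  rw [algebraMap_le_iff_le_spectrum hM.isSelfAdjoint, hM.spectrum_real_eq_range_eigenvalues]
  rintro _ ⟨j, rfl⟩
  exact hi j

theorem IsLeastEigenvalue.eq_of_algebraMap_le {l e : ℝ} (hl : IsLeastEigenvalue M l)
    (hle : algebraMap ℝ _ e ≤ M) (he : IsEigenvalue M e) : l = e :=
  le_antisymm (hl.2 e he) (hl.1.le_of_algebraMap_le hle)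

theorem IsEigenvalue.kronecker_one_add_one_kronecker {A : Matrix ι ι ℂ} {B : Matrix κ κ ℂ}
    {a b : ℝ} (ha : IsEigenvalue A a) (hb : IsEigenvalue B b) :
    IsEigenvalue (A ⊗ₖ 1 + 1 ⊗ₖ B) (a + b) := by
  obtain ⟨x, hx, hAx⟩ := ha
  obtain ⟨y, hy, hBy⟩ := hb
  obtain ⟨i, hi⟩ := Function.ne_iff.1 hx
  obtain ⟨j, hj⟩ := Function.ne_iff.1 hy
  refine ⟨fun p => x p.1 * y p.2, Function.ne_iff.2 ⟨(i, j), mul_ne_zero hi hj⟩, ?_⟩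
  rw [add_mulVec, kronecker_mulVec_mul, kronecker_mulVec_mul, hAx, hBy, one_mulVec, one_mulVec]
  ext p
  simp only [Pi.add_apply, Pi.smul_apply, smul_eq_mul, Complex.ofReal_add]
  ring

end Eigenvalues

section SpectralGap

variable {ι : Type*} [Fintype ι] [DecidableEq ι] {H P : Matrix ι ι ℂ} {p0 p1 : ℝ}

theorem Matrix.mul_eq_smul_of_mulVec_eq_self_iff (hP : IsIdempotentElem P)
    (hrange : ∀ w, P *ᵥ w = w ↔ H *ᵥ w = (p0 : ℂ) • w) : H * P = (p0 : ℂ) • P := by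
  refine ext_of_mulVec_single fun i => ?_
  rw [← mulVec_mulVec, smul_mulVec]
  exact (hrange _).1 (by rw [mulVec_mulVec, hP.eq])

/-- `H + (p1 - p0) • P` commutes with `P`, and each of its eigenvalues is either `p1` (on the range
of `P`) or an eigenvalue of `H` other than `p0` (on the kernel of `P`). -/
theorem Matrix.IsHermitian.le_of_spectral_gap (hH : H.IsHermitian) (hP : IsStarProjection P)
    (hrange : ∀ w, P *ᵥ w = w ↔ H *ᵥ w = (p0 : ℂ) • w)
    (hgap : ∀ ν, IsEigenvalue H ν → ν = p0 ∨ p1 ≤ ν) :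
    algebraMap ℝ _ p0 + (p1 - p0) • (1 - P) ≤ H := by
  have hHP : H * P = (p0 : ℂ) • P := mul_eq_smul_of_mulVec_eq_self_iff hP.isIdempotentElem hrange
  have hPH : P * H = (p0 : ℂ) • P := by
    have := congrArg (·ᴴ) hHP
    rwa [conjTranspose_mul, hH.eq, conjTranspose_smul, hP.isSelfAdjoint.isHermitian.eq,
      Complex.star_def, Complex.conj_ofReal] at this
  set H' := H + (p1 - p0) • P with hH'
  suffices algebraMap ℝ _ p1 ≤ H' by
    convert sub_le_sub_right this ((p1 - p0) • P) using 1
    · rw [Algebra.algebraMap_eq_smul_one, Algebra.algebraMap_eq_smul_one]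
      module
    · rw [hH', add_sub_cancel_right]
  have hH'herm : H'.IsHermitian :=
    hH.isSelfAdjoint.add ((IsSelfAdjoint.all _).smul hP.isSelfAdjoint)
  refine hH'herm.algebraMap_le_iff.2 fun ν ⟨v, hv, hH'v⟩ => ?_
  set w := (1 - P) *ᵥ v with hw
  have hPw : P *ᵥ w = 0 := by rw [hw, mulVec_mulVec, hP.mul_one_sub_self, zero_mulVec]
  have hcomm : (1 - P) * H' = H * (1 - P) := by
    simp only [hH', sub_mul, mul_add, one_mul, mul_sub, mul_one, hHP, hPH, mul_smul_comm,
      hP.isIdempotentElem.eq]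
    module
  have hHw : H *ᵥ w = (ν : ℂ) • w := by
    rw [hw, mulVec_mulVec, ← hcomm, ← mulVec_mulVec, hH'v, mulVec_smul]
  by_cases hw0 : w = 0
  · have hPv : P *ᵥ v = v := by rw [hw, sub_mulVec, one_mulVec, sub_eq_zero] at hw0; exact hw0.symm
    have hp1v : (ν : ℂ) • v = (p1 : ℂ) • v := by
      rw [← hH'v, hH', add_mulVec, (hrange v).1 hPv, smul_mulVec, hPv, Complex.coe_smul,
        Complex.coe_smul, ← add_smul, add_sub_cancel]
    exact (Complex.ofReal_injective (smul_left_injective ℂ hv hp1v)).ge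
  · rcases hgap ν ⟨w, hw0, hHw⟩ with rfl | hle
    · exact absurd (((hrange w).2 hHw).symm.trans hPw) hw0
    · exact hle

end SpectralGap

section GroundStates

variable {ι : Type*} [Fintype ι] [DecidableEq ι] {H V Q : Matrix ι ι ℂ}

theorem Matrix.mulVec_eq_zero_of_algebraMap_add_smul_le {e δ : ℝ} (hQ : IsStarProjection Q)
    (hδ : 0 < δ) (hle : algebraMap ℝ _ e + δ • Q ≤ H) {ψ : ι → ℂ}
    (hψ : H *ᵥ ψ = (e : ℂ) • ψ) : Q *ᵥ ψ = 0 := by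
  have hform := (le_iff.1 hle).dotProduct_mulVec_nonneg ψ
  have hQψ : star ψ ⬝ᵥ Q *ᵥ ψ = star (Q *ᵥ ψ) ⬝ᵥ Q *ᵥ ψ := by
    rw [star_mulVec, ← dotProduct_mulVec, mulVec_mulVec, hQ.isSelfAdjoint.isHermitian.eq,
      hQ.isIdempotentElem.eq]
  rw [sub_mulVec, add_mulVec, hψ, algebraMap_mulVec, sub_add_cancel_left, dotProduct_neg,
    smul_mulVec, dotProduct_smul, hQψ, Complex.real_smul, neg_nonneg] at hform
  have hδQψ := le_antisymm hform
    (mul_nonneg (Complex.zero_le_real.2 hδ.le) (dotProduct_star_self_nonneg (Q *ᵥ ψ)))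
  rw [mul_eq_zero, Complex.ofReal_eq_zero, dotProduct_star_self_eq_zero] at hδQψ
  exact hδQψ.resolve_left hδ.ne'

theorem IsLeastEigenvalue.mulVec_eq_smul_iff_add {e δ₁ δ₂ l₁ l₂ : ℝ}
    (hQ : IsStarProjection Q) (hδ₁ : 0 < δ₁) (hδ₂ : 0 < δ₂)
    (hH : algebraMap ℝ _ e + δ₁ • Q ≤ H) (hHV : algebraMap ℝ _ e + δ₂ • Q ≤ H + V)
    (hV : ∀ ψ, Q *ᵥ ψ = 0 → V *ᵥ ψ = 0) (he : IsEigenvalue H e)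
    (hl₁ : IsLeastEigenvalue H l₁) (hl₂ : IsLeastEigenvalue (H + V) l₂) (ψ : ι → ℂ) :
    H *ᵥ ψ = (l₁ : ℂ) • ψ ↔ (H + V) *ᵥ ψ = (l₂ : ℂ) • ψ := by
  have hle {δ : ℝ} (hδ : 0 < δ) : algebraMap ℝ (Matrix ι ι ℂ) e ≤ algebraMap ℝ _ e + δ • Q :=
    le_add_of_nonneg_right (hQ.nonneg.posSemidef.smul hδ.le).nonneg
  have hHV_eq {ψ : ι → ℂ} (hψ : H *ᵥ ψ = (e : ℂ) • ψ) : (H + V) *ᵥ ψ = (e : ℂ) • ψ := by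
    rw [add_mulVec, hψ, hV _ (mulVec_eq_zero_of_algebraMap_add_smul_le hQ hδ₁ hH hψ), add_zero]
  obtain ⟨φ, hφ, hHφ⟩ := he
  obtain rfl : l₁ = e := hl₁.eq_of_algebraMap_le ((hle hδ₁).trans hH) ⟨φ, hφ, hHφ⟩
  obtain rfl : l₂ = l₁ := hl₂.eq_of_algebraMap_le ((hle hδ₂).trans hHV) ⟨φ, hφ, hHV_eq hHφ⟩
  refine ⟨hHV_eq, fun hψ => ?_⟩
  have hVψ := hV _ (mulVec_eq_zero_of_algebraMap_add_smul_le hQ hδ₂ hHV hψ)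
  rwa [add_mulVec, hVψ, add_zero] at hψ

end GroundStates

theorem ground_state_lemma_general {n m : ℕ}
    (HS : Matrix (Fin n) (Fin n) ℂ) (HP : Matrix (Fin m) (Fin m) ℂ)
    (Proj : Matrix (Fin m) (Fin m) ℂ) (A : Matrix (Fin n) (Fin n) ℂ)
    (p0 p1 amin : ℝ)
    (hHS : HS.IsHermitian) (hHP : HP.IsHermitian) (hA : A.IsHermitian)
    -- `p0` is the least eigenvalue of `H_P`
    (hp0 : IsLeastEigenvalue HP p0)
    -- `p1` is the second-smallest distinct eigenvalue of `H_P`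
    (hp01 : p0 < p1)
    (hp1 : ∀ ν : ℝ, IsEigenvalue HP ν → ν = p0 ∨ p1 ≤ ν)
    -- `Proj` is the orthogonal projection onto the `p0`-eigenspace of `H_P`
    (hProjH : Proj.IsHermitian) (hProj2 : Proj * Proj = Proj)
    (hProjRange : ∀ w : Fin m → ℂ, Proj.mulVec w = w ↔ HP.mulVec w = (p0 : ℂ) • w)
    -- `amin` is the least eigenvalue of `A` and the gap condition holds
    (hamin : IsLeastEigenvalue A amin)
    (hgap : amin + p1 - p0 > 0)
    -- `l1` and `l2` are the least eigenvalues of `H1` and `H2` respectively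
    (l1 l2 : ℝ)
    (hl1 : IsLeastEigenvalue
      (HS ⊗ₖ (1 : Matrix (Fin m) (Fin m) ℂ) + (1 : Matrix (Fin n) (Fin n) ℂ) ⊗ₖ HP) l1)
    (hl2 : IsLeastEigenvalue
      (HS ⊗ₖ (1 : Matrix (Fin m) (Fin m) ℂ) + (1 : Matrix (Fin n) (Fin n) ℂ) ⊗ₖ HP
        + A ⊗ₖ ((1 : Matrix (Fin m) (Fin m) ℂ) - Proj)) l2)
    (ψ : Fin n × Fin m → ℂ) :
    (HS ⊗ₖ (1 : Matrix (Fin m) (Fin m) ℂ)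
        + (1 : Matrix (Fin n) (Fin n) ℂ) ⊗ₖ HP).mulVec ψ = (l1 : ℂ) • ψ ↔
    (HS ⊗ₖ (1 : Matrix (Fin m) (Fin m) ℂ) + (1 : Matrix (Fin n) (Fin n) ℂ) ⊗ₖ HP
        + A ⊗ₖ ((1 : Matrix (Fin m) (Fin m) ℂ) - Proj)).mulVec ψ = (l2 : ℂ) • ψ := by
  have hProj : IsStarProjection Proj := (isStarProjection_iff Proj).2 ⟨hProj2, hProjH⟩
  set Q := (1 : Matrix (Fin m) (Fin m) ℂ) - Proj
  set Qt := (1 : Matrix (Fin n) (Fin n) ℂ) ⊗ₖ Q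
  obtain ⟨ψ₀, hψ₀, -⟩ := hl1.1
  obtain ⟨⟨i, -⟩, -⟩ := Function.ne_iff.1 hψ₀
  have : Nonempty (Fin n) := ⟨i⟩
  obtain ⟨s0, hs0⟩ := hHS.exists_isLeastEigenvalue
  have hH1 : algebraMap ℝ _ (s0 + p0) + (p1 - p0) • Qt ≤ HS ⊗ₖ 1 + 1 ⊗ₖ HP :=
    algebraMap_add_one_kronecker_le (hHS.algebraMap_le_iff.2 hs0.2)
      (hHP.le_of_spectral_gap hProj hProjRange hp1)
  have hAQ : amin • Qt ≤ A ⊗ₖ Q := by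
    simpa only [Algebra.algebraMap_eq_smul_one, smul_kronecker] using
      kronecker_le_kronecker_left (hA.algebraMap_le_iff.2 hamin.2) hProj.one_sub.nonneg
  have hH2 :
      algebraMap ℝ _ (s0 + p0) + (amin + p1 - p0) • Qt ≤ HS ⊗ₖ 1 + 1 ⊗ₖ HP + A ⊗ₖ Q := by
    convert add_le_add hH1 hAQ using 1
    module
  refine hl1.mulVec_eq_smul_iff_add ((IsStarProjection.one _).kronecker hProj.one_sub)
    (sub_pos.2 hp01) (by linarith) hH1 hH2 (fun χ hχ => ?_)
    (hs0.1.kronecker_one_add_one_kronecker hp0.1) hl2 ψ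
  rw [← mul_one A, ← one_mul Q, mul_kronecker_mul, ← mulVec_mulVec, hχ, mulVec_zero]

/-- given Hermitian `H_S`, Hermitian `H_P` with least eigenvalue `p0` and
second-smallest distinct eigenvalue `p1`, `Π` the orthogonal projection onto the
`p0`-eigenspace of `H_P`, and Hermitian `A` commuting with `H_S` whose least eigenvalue
`a_min` satisfies `a_min + p1 - p0 > 0`, a vector `ψ` is a ground state of
`H1 = H_S ⊗ I + I ⊗ H_P` iff it is a ground state of `H2 = H1 + A ⊗ (I - Π)`. -/
theorem ground_state_lemma {n m : ℕ}
    (HS : Matrix (Fin n) (Fin n) ℂ) (HP : Matrix (Fin m) (Fin m) ℂ)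
    (Proj : Matrix (Fin m) (Fin m) ℂ) (A : Matrix (Fin n) (Fin n) ℂ)
    (p0 p1 amin : ℝ)
    (hHS : HS.IsHermitian) (hHP : HP.IsHermitian) (hA : A.IsHermitian)
    (hAcomm : A * HS = HS * A)
    -- `p0` is the least eigenvalue of `H_P`
    (hp0 : IsLeastEigenvalue HP p0)
    -- `p1` is the second-smallest distinct eigenvalue of `H_P`
    (hp1ev : IsEigenvalue HP p1) (hp01 : p0 < p1)
    (hp1 : ∀ ν : ℝ, IsEigenvalue HP ν → ν = p0 ∨ p1 ≤ ν)
    -- `Proj` is the orthogonal projection onto the `p0`-eigenspace of `H_P`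
    (hProjH : Proj.IsHermitian) (hProj2 : Proj * Proj = Proj)
    (hProjRange : ∀ w : Fin m → ℂ, Proj.mulVec w = w ↔ HP.mulVec w = (p0 : ℂ) • w)
    -- `amin` is the least eigenvalue of `A` and the gap condition holds
    (hamin : IsLeastEigenvalue A amin)
    (hgap : amin + p1 - p0 > 0)
    -- `l1` and `l2` are the least eigenvalues of `H1` and `H2` respectively
    (l1 l2 : ℝ)
    (hl1 : IsLeastEigenvalue
      (HS ⊗ₖ (1 : Matrix (Fin m) (Fin m) ℂ) + (1 : Matrix (Fin n) (Fin n) ℂ) ⊗ₖ HP) l1)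
    (hl2 : IsLeastEigenvalue
      (HS ⊗ₖ (1 : Matrix (Fin m) (Fin m) ℂ) + (1 : Matrix (Fin n) (Fin n) ℂ) ⊗ₖ HP
        + A ⊗ₖ ((1 : Matrix (Fin m) (Fin m) ℂ) - Proj)) l2)
    (ψ : Fin n × Fin m → ℂ) (hψ : ψ ≠ 0) :
    (HS ⊗ₖ (1 : Matrix (Fin m) (Fin m) ℂ)
        + (1 : Matrix (Fin n) (Fin n) ℂ) ⊗ₖ HP).mulVec ψ = (l1 : ℂ) • ψ ↔
    (HS ⊗ₖ (1 : Matrix (Fin m) (Fin m) ℂ) + (1 : Matrix (Fin n) (Fin n) ℂ) ⊗ₖ HP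
        + A ⊗ₖ ((1 : Matrix (Fin m) (Fin m) ℂ) - Proj)).mulVec ψ = (l2 : ℂ) • ψ :=
  ground_state_lemma_general HS HP Proj A p0 p1 amin hHS hHP hA hp0 hp01 hp1 hProjH hProj2
    hProjRange hamin hgap l1 l2 hl1 hl2 ψ
end

section
/- Let H_S be an n×n complex Hermitian matrix with least eigenvalue s0, H_P an m×m complex Hermitian matrix with least eigenvalue p0, Π the orthogonal projection onto the p0-eigenspace of H_P, and A an n×n Hermitian positive semidefinite matrix with A·H_S = H_S·A. Set H2 = H_S ⊗ I_m + I_n ⊗ H_P + A ⊗ (I_m − Π). Then the least eigenvalue of H2 equals s0 + p0, and every vector of the form v ⊗ w, where H_S v = s0 v and H_P w = p0 w, satisfies H2 (v ⊗ w) = (s0 + p0)(v ⊗ w). -/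
open Matrix Kronecker
open scoped ComplexOrder

/-- The Kronecker (tensor) product of two vectors. -/
def vecKron {K L : Type*} (v : K → ℂ) (w : L → ℂ) : K × L → ℂ :=
  fun p => v p.1 * w p.2

/-! Write `H2 - (s0 + p0) • 1` as `(H_S - s0) ⊗ I + I ⊗ (H_P - p0) + A ⊗ (I - Π)`.
Each summand is a Kronecker product of positive semidefinite matrices (`I - Π` is again a
star projection), so the shifted matrix is positive semidefinite and no eigenvalue of `H2`
lies below `s0 + p0`. On `v ⊗ w` the perturbation vanishes because `Π w = w`, so `v ⊗ w`
is an eigenvector for `s0 + p0`. -/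

open scoped MatrixOrder

theorem vecKron_ne_zero {K L : Type*} {v : K → ℂ} {w : L → ℂ} (hv : v ≠ 0)
    (hw : w ≠ 0) : vecKron v w ≠ 0 := by
  obtain ⟨i, hi⟩ := Function.ne_iff.mp hv
  obtain ⟨j, hj⟩ := Function.ne_iff.mp hw
  exact Function.ne_iff.mpr ⟨(i, j), mul_ne_zero hi hj⟩

variable {K L : Type*} [Fintype K] [Fintype L]

theorem kronecker_mulVec_vecKron (M : Matrix K K ℂ) (N : Matrix L L ℂ) (v : K → ℂ)
    (w : L → ℂ) :
    (M ⊗ₖ N) *ᵥ vecKron v w = vecKron (M *ᵥ v) (N *ᵥ w) := by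
  ext ⟨i, j⟩
  simp only [mulVec, dotProduct, vecKron, kroneckerMap_apply, Fintype.sum_prod_type,
    Finset.sum_mul_sum]
  exact Finset.sum_congr rfl fun k _ => Finset.sum_congr rfl fun l _ => by ring

theorem Matrix.PosSemidef.nonneg_of_isEigenvalue {M : Matrix K K ℂ} (hM : M.PosSemidef) {μ : ℝ}
    (hμ : IsEigenvalue M μ) : 0 ≤ μ := by
  obtain ⟨x, hx0, hx⟩ := hμ
  have h := hM.dotProduct_mulVec_nonneg x
  rw [hx, dotProduct_smul, smul_eq_mul, Complex.le_def, Complex.re_ofReal_mul] at h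
  have hpos : 0 < star x ⬝ᵥ x := dotProduct_star_self_pos_iff.mpr hx0
  exact (mul_nonneg_iff_of_pos_right (Complex.lt_def.mp hpos).1).mp h.1

variable [DecidableEq K] [DecidableEq L]

theorem isEigenvalue_sub_smul_one_iff {M : Matrix K K ℂ} {c μ : ℝ} :
    IsEigenvalue (M - (c : ℂ) • 1) μ ↔ IsEigenvalue M (μ + c) := by
  refine exists_congr fun x => and_congr_right fun _ => ?_
  rw [sub_mulVec, smul_mulVec, one_mulVec, sub_eq_iff_eq_add]
  push_cast
  rw [add_smul]

theorem Matrix.IsHermitian.isEigenvalue_eigenvalues {M : Matrix K K ℂ} (hM : M.IsHermitian)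
    (i : K) : IsEigenvalue M (hM.eigenvalues i) :=
  ⟨_, hM.eigenvectorBasis.orthonormal.ne_zero i ∘ (WithLp.toLp_eq_zero 2).mpr,
    hM.mulVec_eigenvectorBasis i⟩

theorem le_of_posSemidef_sub_smul_one {M : Matrix K K ℂ} {c ν : ℝ}
    (h : (M - (c : ℂ) • 1).PosSemidef) (hν : IsEigenvalue M ν) : c ≤ ν := by
  have := h.nonneg_of_isEigenvalue
    (isEigenvalue_sub_smul_one_iff.mpr ((sub_add_cancel ν c).symm ▸ hν))
  linarith

theorem Matrix.IsHermitian.posSemidef_sub_smul_one {M : Matrix K K ℂ} (hM : M.IsHermitian)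
    {c : ℝ} (h : ∀ ν, IsEigenvalue M ν → c ≤ ν) : (M - (c : ℂ) • 1).PosSemidef := by
  have hH : (M - (c : ℂ) • 1).IsHermitian :=
    hM.sub (isHermitian_one.smul (Complex.conj_ofReal c))
  refine hH.posSemidef_iff_eigenvalues_nonneg.mpr fun i => show 0 ≤ hH.eigenvalues i from ?_
  have := h _ (isEigenvalue_sub_smul_one_iff.mp (hH.isEigenvalue_eigenvalues i))
  linarith

theorem posSemidef_kronecker_one_add_one_kronecker_sub {M : Matrix K K ℂ} {N : Matrix L L ℂ}
    {s p : ℝ} (hM : (M - (s : ℂ) • 1).PosSemidef)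
    (hN : (N - (p : ℂ) • 1).PosSemidef) :
    (M ⊗ₖ 1 + 1 ⊗ₖ N - ((s + p : ℝ) : ℂ) • 1).PosSemidef := by
  have h : M ⊗ₖ 1 + 1 ⊗ₖ N - ((s + p : ℝ) : ℂ) • 1
      = (M - (s : ℂ) • 1) ⊗ₖ 1 + 1 ⊗ₖ (N - (p : ℂ) • 1) := by
    simp only [sub_eq_add_neg, add_kronecker, kronecker_add, ← neg_smul, smul_kronecker,
      kronecker_smul, one_kronecker_one]
    push_cast
    module
  rw [h]
  exact (hM.kronecker .one).add (PosSemidef.one.kronecker hN)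

theorem kronecker_one_add_one_kronecker_add_kronecker_mulVec_vecKron {M : Matrix K K ℂ}
    {N : Matrix L L ℂ} (B : Matrix K K ℂ) {C : Matrix L L ℂ} {v : K → ℂ} {w : L → ℂ}
    {s p : ℝ} (hv : M *ᵥ v = (s : ℂ) • v) (hw : N *ᵥ w = (p : ℂ) • w)
    (hCw : C *ᵥ w = 0) :
    (M ⊗ₖ 1 + 1 ⊗ₖ N + B ⊗ₖ C) *ᵥ vecKron v w = ((s + p : ℝ) : ℂ) • vecKron v w := by
  simp only [add_mulVec, kronecker_mulVec_vecKron, one_mulVec, hv, hw, hCw]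
  ext ⟨i, j⟩
  simp only [vecKron, Pi.add_apply, Pi.smul_apply, smul_eq_mul, Pi.zero_apply, mul_zero]
  push_cast
  ring

theorem least_eigenvalue_H2_general {n m : ℕ}
    (HS : Matrix (Fin n) (Fin n) ℂ) (HP : Matrix (Fin m) (Fin m) ℂ)
    (Proj : Matrix (Fin m) (Fin m) ℂ) (A : Matrix (Fin n) (Fin n) ℂ)
    (s0 p0 : ℝ)
    (hHS : HS.IsHermitian) (hHP : HP.IsHermitian)
    (hs0 : IsLeastEigenvalue HS s0) (hp0 : IsLeastEigenvalue HP p0)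
    -- `Proj` is the orthogonal projection onto the `p0`-eigenspace of `H_P`
    (hProjH : Proj.IsHermitian) (hProj2 : Proj * Proj = Proj)
    (hProjRange : ∀ w : Fin m → ℂ, Proj.mulVec w = w ↔ HP.mulVec w = (p0 : ℂ) • w)
    -- `A` is Hermitian positive semidefinite and commutes with `H_S`
    (hA : A.PosSemidef) :
    IsLeastEigenvalue
      (HS ⊗ₖ (1 : Matrix (Fin m) (Fin m) ℂ) + (1 : Matrix (Fin n) (Fin n) ℂ) ⊗ₖ HP
        + A ⊗ₖ ((1 : Matrix (Fin m) (Fin m) ℂ) - Proj)) (s0 + p0) ∧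
    ∀ (v : Fin n → ℂ) (w : Fin m → ℂ),
      HS.mulVec v = (s0 : ℂ) • v → HP.mulVec w = (p0 : ℂ) • w →
      (HS ⊗ₖ (1 : Matrix (Fin m) (Fin m) ℂ) + (1 : Matrix (Fin n) (Fin n) ℂ) ⊗ₖ HP
        + A ⊗ₖ ((1 : Matrix (Fin m) (Fin m) ℂ) - Proj)).mulVec (vecKron v w)
        = ((s0 + p0 : ℝ) : ℂ) • vecKron v w := by
  have hEigvec : ∀ (v : Fin n → ℂ) (w : Fin m → ℂ),
      HS *ᵥ v = (s0 : ℂ) • v → HP *ᵥ w = (p0 : ℂ) • w →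
      (HS ⊗ₖ 1 + 1 ⊗ₖ HP + A ⊗ₖ (1 - Proj)) *ᵥ vecKron v w
        = ((s0 + p0 : ℝ) : ℂ) • vecKron v w :=
    fun v w hv hw => kronecker_one_add_one_kronecker_add_kronecker_mulVec_vecKron A hv hw
      (by rw [sub_mulVec, one_mulVec, (hProjRange w).mpr hw, sub_self])
  have hShift :
      (HS ⊗ₖ 1 + 1 ⊗ₖ HP + A ⊗ₖ (1 - Proj) - ((s0 + p0 : ℝ) : ℂ) • 1).PosSemidef := by
    have hProj : (1 - Proj).PosSemidef :=
      (IsStarProjection.one_sub_nonneg ⟨hProj2, hProjH⟩).posSemidef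
    rw [add_sub_right_comm]
    exact (posSemidef_kronecker_one_add_one_kronecker_sub
      (hHS.posSemidef_sub_smul_one hs0.2) (hHP.posSemidef_sub_smul_one hp0.2)).add
      (hA.kronecker hProj)
  obtain ⟨v, hv0, hv⟩ := hs0.1
  obtain ⟨w, hw0, hw⟩ := hp0.1
  exact ⟨⟨⟨vecKron v w, vecKron_ne_zero hv0 hw0, hEigvec v w hv hw⟩,
    fun ν => le_of_posSemidef_sub_smul_one hShift⟩, hEigvec⟩

/-- for Hermitian `H_S` with least eigenvalue `s0`, Hermitian `H_P` with least
eigenvalue `p0`, `Π` the orthogonal projection onto the `p0`-eigenspace of `H_P`, and `A`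
positive semidefinite commuting with `H_S`, the matrix
`H2 = H_S ⊗ I + I ⊗ H_P + A ⊗ (I - Π)` has least eigenvalue `s0 + p0`, attained on every
`v ⊗ w` with `H_S v = s0 v` and `H_P w = p0 w`. -/
theorem least_eigenvalue_H2 {n m : ℕ}
    (HS : Matrix (Fin n) (Fin n) ℂ) (HP : Matrix (Fin m) (Fin m) ℂ)
    (Proj : Matrix (Fin m) (Fin m) ℂ) (A : Matrix (Fin n) (Fin n) ℂ)
    (s0 p0 : ℝ)
    (hHS : HS.IsHermitian) (hHP : HP.IsHermitian)
    (hs0 : IsLeastEigenvalue HS s0) (hp0 : IsLeastEigenvalue HP p0)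
    -- `Proj` is the orthogonal projection onto the `p0`-eigenspace of `H_P`
    (hProjH : Proj.IsHermitian) (hProj2 : Proj * Proj = Proj)
    (hProjRange : ∀ w : Fin m → ℂ, Proj.mulVec w = w ↔ HP.mulVec w = (p0 : ℂ) • w)
    -- `A` is Hermitian positive semidefinite and commutes with `H_S`
    (hA : A.PosSemidef) (hAcomm : A * HS = HS * A) :
    IsLeastEigenvalue
      (HS ⊗ₖ (1 : Matrix (Fin m) (Fin m) ℂ) + (1 : Matrix (Fin n) (Fin n) ℂ) ⊗ₖ HP
        + A ⊗ₖ ((1 : Matrix (Fin m) (Fin m) ℂ) - Proj)) (s0 + p0) ∧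
    ∀ (v : Fin n → ℂ) (w : Fin m → ℂ),
      HS.mulVec v = (s0 : ℂ) • v → HP.mulVec w = (p0 : ℂ) • w →
      (HS ⊗ₖ (1 : Matrix (Fin m) (Fin m) ℂ) + (1 : Matrix (Fin n) (Fin n) ℂ) ⊗ₖ HP
        + A ⊗ₖ ((1 : Matrix (Fin m) (Fin m) ℂ) - Proj)).mulVec (vecKron v w)
        = ((s0 + p0 : ℝ) : ℂ) • vecKron v w :=
  least_eigenvalue_H2_general HS HP Proj A s0 p0 hHS hHP hs0 hp0 hProjH hProj2 hProjRange hA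
end

section
/- Let A be an n×n complex matrix and P an m×m complex matrix with P² = P. Then for every complex scalar q, the matrix exponential satisfies exp(q · A ⊗ (I_m − P)) = exp(qA) ⊗ (I_m − P) + I_n ⊗ P. -/
/-!
Put `Q = 1 - P`, again an idempotent. Then `X ↦ X ⊗ Q` is multiplicative, so in the exponential
series `(q A ⊗ Q)^k = (q A)^k ⊗ Q` for every `k ≥ 1`, while the constant term is
`1 = 1 ⊗ Q + 1 ⊗ P`.
-/

open Matrix Kronecker
open scoped Nat

namespace NormedSpace

variable {𝔸 𝔹 : Type*} [NormedRing 𝔸] [NormedAlgebra ℚ 𝔸] [CompleteSpace 𝔸]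
  [NormedRing 𝔹] [NormedAlgebra ℚ 𝔹] [CompleteSpace 𝔹]

theorem exp_eq_one_add_tsum (x : 𝔸) :
    exp x = 1 + ∑' k : ℕ, ((k + 1)! ⁻¹ : ℚ) • x ^ (k + 1) := by
  rw [congrFun exp_eq_tsum_rat x, (expSeries_summable' x).tsum_eq_zero_add]
  simp

/-- The correction `1 - f 1` comes from the constant term of the series, the only power of `x`
that `f` does not preserve. -/
theorem exp_map_nonUnitalRingHom (f : 𝔸 →ₙ+* 𝔹) (hf : Continuous f) (x : 𝔸) :
    exp (f x) = f (exp x) + (1 - f 1) := by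
  have hpow (k : ℕ) : f x ^ (k + 1) = f (x ^ (k + 1)) := by
    induction k with
    | zero => simp
    | succ k ih => rw [pow_succ, ih, ← map_mul, ← pow_succ]
  have htail : HasSum (fun k : ℕ => ((k + 1)! ⁻¹ : ℚ) • x ^ (k + 1)) (exp x - 1) := by
    rw [exp_eq_one_add_tsum, add_sub_cancel_left]
    exact ((summable_nat_add_iff 1).mpr (expSeries_summable' x)).hasSum
  calc exp (f x) = 1 + ∑' k : ℕ, f (((k + 1)! ⁻¹ : ℚ) • x ^ (k + 1)) := by
        simp_rw [exp_eq_one_add_tsum, hpow, map_rat_smul]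
    _ = 1 + f (exp x - 1) := by rw [← (htail.map f hf).tsum_eq]; rfl
    _ = f (exp x) + (1 - f 1) := by rw [map_sub]; abel

end NormedSpace

namespace Matrix

variable {m n α : Type*}

@[simps]
def kroneckerRightNonUnitalRingHom [Fintype m] [Fintype n] [CommSemiring α] (Q : Matrix n n α)
    (hQ : IsIdempotentElem Q) : Matrix m m α →ₙ+* Matrix (m × n) (m × n) α where
  toFun A := A ⊗ₖ Q
  map_mul' A B := by rw [← mul_kronecker_mul, hQ.eq]
  map_zero' := zero_kronecker Q
  map_add' A B := add_kronecker A B Q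

theorem continuous_kronecker_right [Mul α] [TopologicalSpace α] [ContinuousMul α]
    (Q : Matrix n n α) : Continuous fun A : Matrix m m α => A ⊗ₖ Q :=
  continuous_pi fun _ => continuous_pi fun _ =>
    ((continuous_apply _).comp (continuous_apply _)).mul continuous_const

end Matrix

/-- for any `n×n` matrix `A` and any idempotent `m×m` matrix `P`, and any
scalar `q`, `exp(q · A ⊗ (I - P)) = exp(qA) ⊗ (I - P) + I ⊗ P`. -/
theorem exp_kron_idempotent {n m : ℕ}
    (A : Matrix (Fin n) (Fin n) ℂ) (P : Matrix (Fin m) (Fin m) ℂ)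
    (hP : P * P = P) (q : ℂ) :
    NormedSpace.exp (q • (A ⊗ₖ ((1 : Matrix (Fin m) (Fin m) ℂ) - P))) =
      (NormedSpace.exp (q • A)) ⊗ₖ ((1 : Matrix (Fin m) (Fin m) ℂ) - P)
        + (1 : Matrix (Fin n) (Fin n) ℂ) ⊗ₖ P := by
  -- The matrix exponential does not depend on the norm; any Banach-algebra norm will do.
  have hexp := open scoped Matrix.Norms.Operator in
    NormedSpace.exp_map_nonUnitalRingHom
      (kroneckerRightNonUnitalRingHom (m := Fin n) _ (IsIdempotentElem.one_sub hP))
      (continuous_kronecker_right _) (q • A)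
  simp only [kroneckerRightNonUnitalRingHom_apply] at hexp
  rw [← smul_kronecker]
  refine hexp.trans (congrArg _ ?_)
  rw [sub_eq_iff_eq_add, ← kronecker_add, add_sub_cancel, one_kronecker_one]
end

section
/- Let H_S and A be n×n complex matrices with A·H_S = H_S·A, let H_P be an m×m complex matrix, and let P be an m×m matrix with P² = P and P·H_P = H_P·P. Then for every complex scalar q, exp(q(H_S ⊗ I_m + I_n ⊗ H_P + A ⊗ (I_m − P))) = (exp(qH_S) ⊗ exp(qH_P)) · (exp(qA) ⊗ (I_m − P) + I_n ⊗ P). -/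
/-!
The exponent splits as `X + Y + Z` with `X = qH_S ⊗ 1`, `Y = 1 ⊗ qH_P`, `Z = qA ⊗ (1 - P)`, and
these commute pairwise because `A` commutes with `H_S` and `1 - P` with `H_P`; hence
`exp (X + Y + Z) = exp X * exp Y * exp Z`. The maps `B ↦ B ⊗ 1` and `B ↦ 1 ⊗ B` are continuous ring
homomorphisms, so they commute with `exp`. Finally `Z = (qA ⊗ 1) * (1 ⊗ (1 - P))` is a product with a
commuting idempotent, and for an idempotent `e` commuting with `a` one has
`(a * e) ^ k = a ^ k * e + 0 ^ k * (1 - e)`, whence `exp (a * e) = exp a * e + (1 - e)`.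
-/

open Matrix Kronecker

theorem NormedSpace.exp_mul_of_isIdempotentElem {𝔸 : Type*} [NormedRing 𝔸] [NormedAlgebra ℚ 𝔸]
    [CompleteSpace 𝔸] {a e : 𝔸} (he : IsIdempotentElem e) (hae : Commute a e) :
    exp (a * e) = exp a * e + (1 - e) := by
  have hpow : ∀ k : ℕ, (a * e) ^ k = a ^ k * e + (0 : 𝔸) ^ k * (1 - e) := by
    rintro (_ | k)
    · simp
    · rw [hae.mul_pow, he.pow_succ_eq, zero_pow k.succ_ne_zero, zero_mul, add_zero]
  have hsum (x : 𝔸) : Summable fun k : ℕ => ((k.factorial : ℚ)⁻¹) • x ^ k :=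
    expSeries_summable' x
  calc exp (a * e)
      = ∑' k : ℕ, (((k.factorial : ℚ)⁻¹ • a ^ k) * e
          + ((k.factorial : ℚ)⁻¹ • (0 : 𝔸) ^ k) * (1 - e)) := by
        simp_rw [exp_eq_tsum_rat, hpow, smul_add, smul_mul_assoc]
    _ = exp a * e + exp 0 * (1 - e) := by
        rw [((hsum a).mul_right e).tsum_add ((hsum 0).mul_right _), (hsum a).tsum_mul_right,
          (hsum 0).tsum_mul_right, exp_eq_tsum_rat]
    _ = exp a * e + (1 - e) := by rw [exp_zero, one_mul]

theorem Commute.kronecker {l m α : Type*} [Fintype l] [Fintype m] [CommSemiring α]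
    {A C : Matrix l l α} {B D : Matrix m m α} (hAC : Commute A C) (hBD : Commute B D) :
    Commute (A ⊗ₖ B) (C ⊗ₖ D) := by
  rw [Commute, SemiconjBy, ← mul_kronecker_mul, ← mul_kronecker_mul, hAC.eq, hBD.eq]

namespace Matrix

open NormedSpace

variable {l m 𝕂 : Type*} [Fintype l] [DecidableEq l] [Fintype m] [DecidableEq m] [RCLike 𝕂]

theorem exp_mul_of_isIdempotentElem {A E : Matrix l l 𝕂} (hE : IsIdempotentElem E)
    (hAE : Commute A E) : exp (A * E) = exp A * E + (1 - E) :=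
  open scoped Matrix.Norms.Operator in NormedSpace.exp_mul_of_isIdempotentElem hE hAE

theorem exp_kronecker_one (B : Matrix l l 𝕂) :
    exp (B ⊗ₖ (1 : Matrix m m 𝕂)) = exp B ⊗ₖ (1 : Matrix m m 𝕂) := by
  let f : Matrix l l 𝕂 →+* Matrix (l × m) (l × m) 𝕂 :=
    { toFun := fun B => B ⊗ₖ (1 : Matrix m m 𝕂)
      map_one' := one_kronecker_one
      map_mul' := fun B C => by rw [← mul_kronecker_mul, one_mul]
      map_zero' := zero_kronecker _
      map_add' := fun B C => add_kronecker B C _ }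
  have hf : Continuous f :=
    continuous_matrix fun i j => (continuous_id.matrix_elem i.1 j.1).mul continuous_const
  open scoped Matrix.Norms.Operator in exact (map_exp f hf B).symm

theorem exp_one_kronecker (B : Matrix m m 𝕂) :
    exp ((1 : Matrix l l 𝕂) ⊗ₖ B) = (1 : Matrix l l 𝕂) ⊗ₖ exp B := by
  let f : Matrix m m 𝕂 →+* Matrix (l × m) (l × m) 𝕂 :=
    { toFun := fun B => (1 : Matrix l l 𝕂) ⊗ₖ B
      map_one' := one_kronecker_one
      map_mul' := fun B C => by rw [← mul_kronecker_mul, one_mul]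
      map_zero' := kronecker_zero _
      map_add' := fun B C => kronecker_add _ B C }
  have hf : Continuous f :=
    continuous_matrix fun i j => continuous_const.mul (continuous_id.matrix_elem i.2 j.2)
  open scoped Matrix.Norms.Operator in exact (map_exp f hf B).symm

theorem exp_kronecker_of_isIdempotentElem (B : Matrix l l 𝕂) {E : Matrix m m 𝕂}
    (hE : IsIdempotentElem E) :
    exp (B ⊗ₖ E) = exp B ⊗ₖ E + (1 : Matrix l l 𝕂) ⊗ₖ (1 - E) := by
  have hfactor : B ⊗ₖ E = (B ⊗ₖ (1 : Matrix m m 𝕂)) * ((1 : Matrix l l 𝕂) ⊗ₖ E) := by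
    rw [← mul_kronecker_mul, mul_one, one_mul]
  have hidem : IsIdempotentElem ((1 : Matrix l l 𝕂) ⊗ₖ E) := by
    rw [IsIdempotentElem, ← mul_kronecker_mul, one_mul, hE.eq]
  have hcomm : Commute (B ⊗ₖ (1 : Matrix m m 𝕂)) ((1 : Matrix l l 𝕂) ⊗ₖ E) :=
    (Commute.one_right B).kronecker (Commute.one_left E)
  have hsub : (1 : Matrix l l 𝕂) ⊗ₖ (1 - E) = 1 - (1 : Matrix l l 𝕂) ⊗ₖ E := by
    rw [eq_sub_iff_add_eq, ← kronecker_add, sub_add_cancel, one_kronecker_one]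
  rw [hfactor, exp_mul_of_isIdempotentElem hidem hcomm, exp_kronecker_one,
    ← mul_kronecker_mul, mul_one, one_mul, hsub]

end Matrix

/-- if `A` commutes with `H_S` and the idempotent `P` commutes with `H_P`,
then for every scalar `q`,
`exp(q(H_S ⊗ I + I ⊗ H_P + A ⊗ (I - P)))
  = (exp(qH_S) ⊗ exp(qH_P)) · (exp(qA) ⊗ (I - P) + I ⊗ P)`. -/
theorem exp_H2_factorization {n m : ℕ}
    (HS A : Matrix (Fin n) (Fin n) ℂ) (HP P : Matrix (Fin m) (Fin m) ℂ)
    (hAcomm : A * HS = HS * A)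
    (hP2 : P * P = P) (hPcomm : P * HP = HP * P) (q : ℂ) :
    NormedSpace.exp (q • (HS ⊗ₖ (1 : Matrix (Fin m) (Fin m) ℂ)
        + (1 : Matrix (Fin n) (Fin n) ℂ) ⊗ₖ HP
        + A ⊗ₖ ((1 : Matrix (Fin m) (Fin m) ℂ) - P))) =
      ((NormedSpace.exp (q • HS)) ⊗ₖ (NormedSpace.exp (q • HP)))
        * ((NormedSpace.exp (q • A)) ⊗ₖ ((1 : Matrix (Fin m) (Fin m) ℂ) - P)
            + (1 : Matrix (Fin n) (Fin n) ℂ) ⊗ₖ P) := by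
  set E : Matrix (Fin m) (Fin m) ℂ := 1 - P
  have hE : IsIdempotentElem E := IsIdempotentElem.one_sub hP2
  have hSA : Commute (q • HS) (q • A) := ((Commute.symm hAcomm).smul_left q).smul_right q
  have hPE : Commute (q • HP) E :=
    ((Commute.one_right HP).sub_right (Commute.symm hPcomm)).smul_left q
  have hXY : Commute ((q • HS) ⊗ₖ (1 : Matrix (Fin m) (Fin m) ℂ))
      ((1 : Matrix (Fin n) (Fin n) ℂ) ⊗ₖ (q • HP)) :=
    (Commute.one_right _).kronecker (Commute.one_left _)
  have hXYZ : Commute ((q • HS) ⊗ₖ (1 : Matrix (Fin m) (Fin m) ℂ)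
      + (1 : Matrix (Fin n) (Fin n) ℂ) ⊗ₖ (q • HP)) ((q • A) ⊗ₖ E) :=
    (hSA.kronecker (Commute.one_left E)).add_left ((Commute.one_left _).kronecker hPE)
  rw [smul_add, smul_add, ← smul_kronecker, ← kronecker_smul, ← smul_kronecker,
    exp_add_of_commute _ _ hXYZ, exp_add_of_commute _ _ hXY, exp_kronecker_one,
    exp_one_kronecker, exp_kronecker_of_isIdempotentElem _ hE, ← mul_kronecker_mul, mul_one,
    one_mul, sub_sub_cancel]
end

section
/- Let H_S and A be n×n complex Hermitian matrices and let v be a unit vector in ℂ^n with H_S v = s0·v and A v = a0·v for real numbers s0, a0. Let δ be real, e0, e1 the standard basis of ℂ², H_P = δ·|e1⟩⟨e1|, H2 = H_S ⊗ I_2 + I_n ⊗ H_P + A ⊗ |e1⟩⟨e1|, and let 𝗛 = (1/√2)·[[1,1],[1,−1]] be the Hadamard matrix on ℂ². Define φ(t) = (I_n ⊗ 𝗛) · exp(−i t H2) · (I_n ⊗ 𝗛) · (v ⊗ e0). Then the probability of finding the probe in state e0, namely ‖(I_n ⊗ |e0⟩⟨e0|) φ(t)‖², equals cos²(ω t / 2)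 = (1 + cos(ω t))/2, where ω = a0 + δ. -/
/-!
The subspace `v ⊗ ℂ²` is invariant under `H2`, which acts on it as `diag(s0, s0 + ω)` on the
probe factor. Hence `exp(-itH2)` acts there as `diag(e^{-i s0 t}, e^{-i (s0 + ω) t})`, and the
circuit reduces to a Ramsey interferometer on the probe: the amplitude of `e0` is the average
`(e^{-i s0 t} + e^{-i (s0 + ω) t}) / 2`, whose squared modulus is `(1 + cos ωt) / 2`.
-/

open Matrix Kronecker

/-- The first standard basis vector of `ℂ²`. -/
def e0 : Fin 2 → ℂ := ![1, 0]

/-- The rank-one projection `|e0⟩⟨e0|` onto the first standard basis vector of `ℂ²`. -/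
def projE0 : Matrix (Fin 2) (Fin 2) ℂ := !![1, 0; 0, 0]

/-- The rank-one projection `|e1⟩⟨e1|` onto the second standard basis vector of `ℂ²`. -/
def projE1 : Matrix (Fin 2) (Fin 2) ℂ := !![0, 0; 0, 1]

/-- The Hadamard matrix on `ℂ²`. -/
noncomputable def hadamard2 : Matrix (Fin 2) (Fin 2) ℂ :=
  ((Real.sqrt 2 : ℂ))⁻¹ • !![1, 1; 1, -1]

open NormedSpace

theorem vecKron_add_right {K L : Type*} (v : K → ℂ) (w w' : L → ℂ) :
    vecKron v (w + w') = vecKron v w + vecKron v w' := by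
  funext p; simp only [vecKron, Pi.add_apply]; ring

theorem vecKron_smul_right {K L : Type*} (v : K → ℂ) (c : ℂ) (w : L → ℂ) :
    vecKron v (c • w) = c • vecKron v w := by
  funext p; simp only [vecKron, Pi.smul_apply, smul_eq_mul]; ring

theorem kroneckerMap_mulVec_vecKron {K L : Type*} [Fintype K] [Fintype L]
    (M : Matrix K K ℂ) (N : Matrix L L ℂ) (x : K → ℂ) (y : L → ℂ) :
    (M ⊗ₖ N) *ᵥ vecKron x y = vecKron (M *ᵥ x) (N *ᵥ y) := by
  ext ⟨i, j⟩
  simp only [mulVec, dotProduct, vecKron, kroneckerMap_apply, Fintype.sum_prod_type,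
    Finset.sum_mul_sum]
  exact Finset.sum_congr rfl fun k _ => Finset.sum_congr rfl fun l _ => by ring

theorem sum_normSq_vecKron {K L : Type*} [Fintype K] [Fintype L] (x : K → ℂ) (y : L → ℂ) :
    ∑ p, Complex.normSq (vecKron x y p) =
      (∑ i, Complex.normSq (x i)) * ∑ j, Complex.normSq (y j) := by
  simp only [vecKron, Complex.normSq_mul, Fintype.sum_prod_type, Finset.sum_mul_sum]

theorem sum_normSq_eq_star_dotProduct_self {K : Type*} [Fintype K] (v : K → ℂ) :
    ((∑ i, Complex.normSq (v i) : ℝ) : ℂ) = star v ⬝ᵥ v := by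
  simp [dotProduct, Complex.normSq_eq_conj_mul_self]

open scoped Matrix.Norms.Operator in
theorem exp_mulVec_of_intertwining {𝕜 m p : Type*} [RCLike 𝕜] [Fintype m] [DecidableEq m]
    [Fintype p] [DecidableEq p] (M : Matrix m m 𝕜) (N : Matrix p p 𝕜)
    (L : (p → 𝕜) →ₗ[𝕜] m → 𝕜) (h : ∀ w, M *ᵥ L w = L (N *ᵥ w)) (w : p → 𝕜) :
    exp M *ᵥ L w = L (exp N *ᵥ w) := by
  have hpow (k : ℕ) : M ^ k *ᵥ L w = L (N ^ k *ᵥ w) := by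
    induction k with
    | zero => simp
    | succ k ih => rw [pow_succ', ← mulVec_mulVec, ih, h, mulVec_mulVec, ← pow_succ']
  have hM := (exp_series_hasSum_exp' (𝕂 := 𝕜) M).mapL
    ((mulVecBilin 𝕜 𝕜).flip (L w)).toContinuousLinearMap
  have hN := ((exp_series_hasSum_exp' (𝕂 := 𝕜) N).mapL
    ((mulVecBilin 𝕜 𝕜).flip w).toContinuousLinearMap).mapL L.toContinuousLinearMap
  simp only [ContinuousLinearMap.map_smul, LinearMap.coe_toContinuousLinearMap',
    LinearMap.flip_apply, mulVecBilin_apply, hpow] at hM hN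
  exact hM.unique hN

theorem exp_mulVec_vecKron {K L : Type*} [Fintype K] [DecidableEq K] [Fintype L] [DecidableEq L]
    (M : Matrix (K × L) (K × L) ℂ) (N : Matrix L L ℂ) (v : K → ℂ)
    (h : ∀ w, M *ᵥ vecKron v w = vecKron v (N *ᵥ w)) (w : L → ℂ) :
    exp M *ᵥ vecKron v w = vecKron v (exp N *ᵥ w) :=
  exp_mulVec_of_intertwining M N
    { toFun := vecKron v, map_add' := vecKron_add_right v, map_smul' := vecKron_smul_right v } h w

theorem exp_diagonal_fin_two (a b : ℂ) :
    exp (diagonal ![a, b]) = diagonal ![Complex.exp a, Complex.exp b] := by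
  rw [exp_diagonal]
  congr 1
  funext i
  fin_cases i <;> simp [Complex.exp_eq_exp_ℂ]

theorem projE1_eq_diagonal : projE1 = diagonal ![0, 1] := by
  ext i j; fin_cases i <;> fin_cases j <;> rfl

theorem kronecker_hamiltonian_mulVec_vecKron {n : Type*} [Fintype n] [DecidableEq n]
    (HS A : Matrix n n ℂ) (v : n → ℂ) (s0 a0 δ : ℂ) (hvS : HS *ᵥ v = s0 • v)
    (hvA : A *ᵥ v = a0 • v) (w : Fin 2 → ℂ) :
    (HS ⊗ₖ (1 : Matrix (Fin 2) (Fin 2) ℂ) + (1 : Matrix n n ℂ) ⊗ₖ (δ • projE1) + A ⊗ₖ projE1) *ᵥ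
        vecKron v w = vecKron v (diagonal ![s0, s0 + δ + a0] *ᵥ w) := by
  simp only [add_mulVec, kroneckerMap_mulVec_vecKron, hvS, hvA, one_mulVec]
  ext ⟨i, j⟩
  simp only [projE1_eq_diagonal, ← diagonal_smul, mulVec_diagonal, vecKron, Pi.add_apply,
    Pi.smul_apply, smul_eq_mul]
  fin_cases j <;>
    simp only [Fin.zero_eta, Fin.mk_one, cons_val_zero, cons_val_one, mul_zero, mul_one] <;> ring

theorem projE0_hadamard_diagonal_hadamard_e0 (α β : ℂ) :
    projE0 *ᵥ (hadamard2 *ᵥ (diagonal ![α, β] *ᵥ (hadamard2 *ᵥ e0))) = ((α + β) / 2) • e0 := by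
  have hr (x : ℂ) : ((Real.sqrt 2 : ℂ))⁻¹ * (x * ((Real.sqrt 2 : ℂ))⁻¹) = x / 2 := by
    rw [mul_left_comm, ← mul_inv, ← Complex.ofReal_mul, Real.mul_self_sqrt zero_le_two]
    norm_num [div_eq_mul_inv]
  ext i
  fin_cases i <;> simp [projE0, hadamard2, e0, mulVec, dotProduct, Fin.sum_univ_two, hr, add_div]

theorem normSq_exp_mul_I_add_exp_mul_I_div_two (x y : ℝ) :
    Complex.normSq ((Complex.exp (x * Complex.I) + Complex.exp (y * Complex.I)) / 2) =
      (1 + Real.cos (x - y)) / 2 := by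
  have hcross : (Complex.exp (x * Complex.I) * (starRingEnd ℂ) (Complex.exp (y * Complex.I))).re =
      Real.cos (x - y) := by
    rw [← Complex.exp_conj, map_mul, Complex.conj_ofReal, Complex.conj_I, ← Complex.exp_add,
      show (x : ℂ) * Complex.I + y * -Complex.I = (x - y : ℝ) * Complex.I by push_cast; ring,
      Complex.exp_ofReal_mul_I_re]
  have hunit (z : ℝ) : Complex.normSq (Complex.exp (z * Complex.I)) = 1 := by
    rw [Complex.normSq_eq_norm_sq, Complex.norm_exp_ofReal_mul_I, one_pow]
  rw [Complex.normSq_div, Complex.normSq_add, hunit, hunit, hcross, Complex.normSq_ofNat]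
  ring

theorem probe_measurement_probability_general {n : ℕ}
    (HS A : Matrix (Fin n) (Fin n) ℂ) (v : Fin n → ℂ) (s0 a0 δ : ℝ)
    (hv : star v ⬝ᵥ v = 1)
    (hvS : HS.mulVec v = (s0 : ℂ) • v)
    (hvA : A.mulVec v = (a0 : ℂ) • v)
    (t : ℝ) :
    (∑ p : Fin n × Fin 2, Complex.normSq
      ((((1 : Matrix (Fin n) (Fin n) ℂ) ⊗ₖ projE0).mulVec
        (((1 : Matrix (Fin n) (Fin n) ℂ) ⊗ₖ hadamard2).mulVec
          ((NormedSpace.exp ((-(Complex.I) * (t : ℂ)) •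
              (HS ⊗ₖ (1 : Matrix (Fin 2) (Fin 2) ℂ)
                + (1 : Matrix (Fin n) (Fin n) ℂ) ⊗ₖ ((δ : ℂ) • projE1)
                + A ⊗ₖ projE1))).mulVec
            (((1 : Matrix (Fin n) (Fin n) ℂ) ⊗ₖ hadamard2).mulVec (vecKron v e0))))) p))
      = Real.cos ((a0 + δ) * t / 2) ^ 2 ∧
    Real.cos ((a0 + δ) * t / 2) ^ 2 = (1 + Real.cos ((a0 + δ) * t)) / 2 := by
  have hcos : Real.cos ((a0 + δ) * t / 2) ^ 2 = (1 + Real.cos ((a0 + δ) * t)) / 2 := by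
    rw [Real.cos_sq, mul_div_cancel₀ _ two_ne_zero]; ring
  refine ⟨?_, hcos⟩
  have hunit : ∑ i, Complex.normSq (v i) = 1 := by
    exact_mod_cast (sum_normSq_eq_star_dotProduct_self v).trans hv
  have hH (w : Fin 2 → ℂ) := congrArg (fun x => (-(Complex.I) * (t : ℂ)) • x)
    (kronecker_hamiltonian_mulVec_vecKron HS A v s0 a0 δ hvS hvA w)
  simp only [← smul_mulVec, ← vecKron_smul_right] at hH
  rw [kroneckerMap_mulVec_vecKron, one_mulVec, exp_mulVec_vecKron _ _ v hH,
    kroneckerMap_mulVec_vecKron, kroneckerMap_mulVec_vecKron, one_mulVec, one_mulVec,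
    ← diagonal_smul, smul_cons, smul_cons, smul_empty, exp_diagonal_fin_two,
    projE0_hadamard_diagonal_hadamard_e0, sum_normSq_vecKron, hunit, one_mul]
  simp only [Fin.sum_univ_two, e0, Pi.smul_apply, cons_val_zero, cons_val_one, smul_eq_mul,
    mul_one, mul_zero, Complex.normSq_zero, add_zero]
  rw [show -Complex.I * t * s0 = (-(s0 * t) : ℝ) * Complex.I by push_cast; ring,
    show -Complex.I * t * (s0 + δ + a0) = (-((s0 + δ + a0) * t) : ℝ) * Complex.I by
      push_cast; ring,
    normSq_exp_mul_I_add_exp_mul_I_div_two, hcos,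
    show -(s0 * t) - -((s0 + δ + a0) * t) = (a0 + δ) * t by ring]

/-- with `H2 = H_S ⊗ I₂ + I_n ⊗ δ|e1⟩⟨e1| + A ⊗ |e1⟩⟨e1|` and
`φ(t) = (I ⊗ 𝗛) exp(-itH2) (I ⊗ 𝗛) (v ⊗ e0)`, the probability of finding the probe in
state `e0` is `‖(I ⊗ |e0⟩⟨e0|) φ(t)‖² = cos²(ωt/2) = (1 + cos(ωt))/2` where `ω = a0 + δ`. -/
theorem probe_measurement_probability {n : ℕ}
    (HS A : Matrix (Fin n) (Fin n) ℂ) (v : Fin n → ℂ) (s0 a0 δ : ℝ)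
    (hHS : HS.IsHermitian) (hA : A.IsHermitian)
    (hv : star v ⬝ᵥ v = 1)
    (hvS : HS.mulVec v = (s0 : ℂ) • v)
    (hvA : A.mulVec v = (a0 : ℂ) • v)
    (t : ℝ) :
    (∑ p : Fin n × Fin 2, Complex.normSq
      ((((1 : Matrix (Fin n) (Fin n) ℂ) ⊗ₖ projE0).mulVec
        (((1 : Matrix (Fin n) (Fin n) ℂ) ⊗ₖ hadamard2).mulVec
          ((NormedSpace.exp ((-(Complex.I) * (t : ℂ)) •
              (HS ⊗ₖ (1 : Matrix (Fin 2) (Fin 2) ℂ)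
                + (1 : Matrix (Fin n) (Fin n) ℂ) ⊗ₖ ((δ : ℂ) • projE1)
                + A ⊗ₖ projE1))).mulVec
            (((1 : Matrix (Fin n) (Fin n) ℂ) ⊗ₖ hadamard2).mulVec (vecKron v e0))))) p))
      = Real.cos ((a0 + δ) * t / 2) ^ 2 ∧
    Real.cos ((a0 + δ) * t / 2) ^ 2 = (1 + Real.cos ((a0 + δ) * t)) / 2 :=
  probe_measurement_probability_general HS A v s0 a0 δ hv hvS hvA t
end

section
/- Let H_S and A be commuting n×n complex Hermitian matrices and let (v_j)_{j=1}^n be an orthonormal basis of ℂ^n of simultaneous eigenvectors, H_S v_j = s_j v_j and A v_j = a_j v_j. Let δ be real, e0, e1 the standard basis of ℂ², H_P = δ·|e1⟩⟨e1|, H2 = H_S ⊗ I_2 + I_n ⊗ H_P + A ⊗ |e1⟩⟨e1|, and 𝗛 the Hadamard matrix on ℂ². Let ρ_S be an n×n density matrix, let a ∈ [0,1], and set ρ0 = ρ_S ⊗ diag(a, 1−a). Define U(t) = (I_n ⊗ 𝗛) · exp(−i t H2) · (I_n ⊗ 𝗛) and ρ1(t) = U(t) ρ0 U(t)*. Then the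 probability of finding the probe in e0 satisfies Tr((I_n ⊗ |e0⟩⟨e0|) ρ1(t)) = (1/2)·(1 + (2a − 1) · Σ_{j=1}^n ⟨v_j, ρ_S v_j⟩ · cos((a_j + δ) t)). -/
open Matrix Kronecker
open scoped ComplexOrder

/-- `H2 = H_S ⊗ I₂ + I_n ⊗ δ|e1⟩⟨e1| + A ⊗ |e1⟩⟨e1|`. -/
noncomputable def H2mat {n : ℕ} (HS A : Matrix (Fin n) (Fin n) ℂ) (δ : ℝ) :
    Matrix (Fin n × Fin 2) (Fin n × Fin 2) ℂ :=
  HS ⊗ₖ (1 : Matrix (Fin 2) (Fin 2) ℂ)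
    + (1 : Matrix (Fin n) (Fin n) ℂ) ⊗ₖ ((δ : ℂ) • projE1)
    + A ⊗ₖ projE1

/-- `U(t) = (I ⊗ 𝗛) exp(-itH2) (I ⊗ 𝗛)`. -/
noncomputable def Umat {n : ℕ} (HS A : Matrix (Fin n) (Fin n) ℂ) (δ t : ℝ) :
    Matrix (Fin n × Fin 2) (Fin n × Fin 2) ℂ :=
  ((1 : Matrix (Fin n) (Fin n) ℂ) ⊗ₖ hadamard2)
    * NormedSpace.exp ((-(Complex.I) * (t : ℂ)) • H2mat HS A δ)
    * ((1 : Matrix (Fin n) (Fin n) ℂ) ⊗ₖ hadamard2)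

/-! In the common eigenbasis `H2 = ∑ⱼ |vⱼ⟩⟨vⱼ| ⊗ diag(sⱼ, sⱼ + δ + aⱼ)`, so
`U(t) = ∑ⱼ |vⱼ⟩⟨vⱼ| ⊗ uⱼ` with `uⱼ = 𝗛 diag(e^{-i sⱼ t}, e^{-i (sⱼ + δ + aⱼ) t}) 𝗛`: the system
merely selects the unitary acting on the probe. Orthogonality of the `|vⱼ⟩⟨vⱼ|` collapses the
trace to `∑ⱼ ⟨vⱼ, ρ_S vⱼ⟩ Tr(|e0⟩⟨e0| uⱼ diag(a, 1-a) uⱼ*)`, and in each probe term only the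
relative phase `(aⱼ + δ) t` of the two diagonal entries survives. -/

def ketBra {n : Type*} (x : n → ℂ) : Matrix n n ℂ := vecMulVec x (star x)

lemma conjTranspose_ketBra {n : Type*} (x : n → ℂ) : (ketBra x)ᴴ = ketBra x := by
  simp [ketBra]

lemma trace_ketBra_mul {n : Type*} [Fintype n] (x : n → ℂ) (ρ : Matrix n n ℂ) :
    (ketBra x * ρ).trace = star x ⬝ᵥ ρ *ᵥ x := by
  rw [ketBra, vecMulVec_mul, trace_vecMulVec, dotProduct_comm, ← dotProduct_mulVec]

lemma Matrix.sum_kronecker {ι l m n p : Type*} (s : Finset ι) (A : ι → Matrix l m ℂ)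
    (B : Matrix n p ℂ) : (∑ j ∈ s, A j) ⊗ₖ B = ∑ j ∈ s, A j ⊗ₖ B := by
  ext ⟨i, k⟩ ⟨i', k'⟩
  simp [Matrix.sum_apply, Finset.sum_mul]

section OrthonormalBasis

variable {n : Type*} [Fintype n] [DecidableEq n] {v : n → n → ℂ}
variable {m : Type*} [Fintype m]

lemma ketBra_mul_ketBra (hv : ∀ j k, star (v j) ⬝ᵥ v k = if j = k then 1 else 0) (j k : n) :
    ketBra (v j) * ketBra (v k) = if j = k then ketBra (v j) else 0 := by
  rw [ketBra, ketBra, vecMulVec_mul_vecMulVec, hv]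
  split_ifs with h <;> simp [h]

lemma mul_conjTranspose_eq_one_of_orthonormal
    (hv : ∀ j k, star (v j) ⬝ᵥ v k = if j = k then 1 else 0) :
    (of v)ᵀ * (of v)ᵀᴴ = 1 := by
  refine mul_eq_one_comm.mp (ext fun j k => ?_)
  simpa [mul_apply, dotProduct, one_apply] using hv j k

lemma sum_ketBra_eq_one (hv : ∀ j k, star (v j) ⬝ᵥ v k = if j = k then 1 else 0) :
    ∑ j, ketBra (v j) = 1 := by
  rw [← mul_conjTranspose_eq_one_of_orthonormal hv]
  ext i k
  simp [ketBra, mul_apply, Matrix.sum_apply, vecMulVec_apply]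

lemma sum_dotProduct_mulVec_eq_trace
    (hv : ∀ j k, star (v j) ⬝ᵥ v k = if j = k then 1 else 0) (ρ : Matrix n n ℂ) :
    ∑ j, star (v j) ⬝ᵥ ρ *ᵥ v j = ρ.trace := by
  simp only [← trace_ketBra_mul, ← trace_sum, ← Finset.sum_mul, sum_ketBra_eq_one hv,
    Matrix.one_mul]

lemma eq_sum_smul_ketBra (hv : ∀ j k, star (v j) ⬝ᵥ v k = if j = k then 1 else 0)
    {B : Matrix n n ℂ} {c : n → ℂ} (hB : ∀ j, B *ᵥ v j = c j • v j) :
    B = ∑ j, c j • ketBra (v j) := by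
  calc B = B * ∑ j, ketBra (v j) := by rw [sum_ketBra_eq_one hv, mul_one]
    _ = ∑ j, c j • ketBra (v j) := by
      simp only [Finset.mul_sum, ketBra, mul_vecMulVec, hB, smul_vecMulVec]

lemma sum_ketBra_kronecker_diagonal [DecidableEq m] (f : n → m → ℂ) :
    ∑ j, ketBra (v j) ⊗ₖ diagonal (f j)
      = ((of v)ᵀ ⊗ₖ (1 : Matrix m m ℂ)) * diagonal (fun p => f p.1 p.2)
          * ((of v)ᵀ ⊗ₖ (1 : Matrix m m ℂ))ᴴ := by
  ext ⟨i, k⟩ ⟨i', k'⟩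
  simp [ketBra, mul_apply, Matrix.sum_apply, vecMulVec_apply, Fintype.sum_prod_type,
    diagonal_apply, one_apply]
  by_cases h : k = k'
  · subst h
    simpa using Finset.sum_congr rfl fun j _ => by ring
  · simp [h, Ne.symm h]

lemma exp_sum_ketBra_kronecker_diagonal [DecidableEq m]
    (hv : ∀ j k, star (v j) ⬝ᵥ v k = if j = k then 1 else 0) (f : n → m → ℂ) :
    NormedSpace.exp (∑ j, ketBra (v j) ⊗ₖ diagonal (f j))
      = ∑ j, ketBra (v j) ⊗ₖ diagonal (fun k => Complex.exp (f j k)) := by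
  set W := (of v)ᵀ ⊗ₖ (1 : Matrix m m ℂ)
  have hW : W * Wᴴ = 1 := by
    rw [conjTranspose_kronecker, ← mul_kronecker_mul,
      mul_conjTranspose_eq_one_of_orthonormal hv, conjTranspose_one, mul_one, one_kronecker_one]
  rw [sum_ketBra_kronecker_diagonal, sum_ketBra_kronecker_diagonal, ← inv_eq_right_inv hW,
    exp_conj _ _ ⟨⟨W, Wᴴ, hW, mul_eq_one_comm.mp hW⟩, rfl⟩, exp_diagonal]
  congr
  funext p
  simp [Complex.exp_eq_exp_ℂ]

lemma trace_one_kronecker_mul_conj_sum_ketBra_kronecker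
    (hv : ∀ j k, star (v j) ⬝ᵥ v k = if j = k then 1 else 0)
    (P g : Matrix m m ℂ) (ρ : Matrix n n ℂ) (u : n → Matrix m m ℂ) :
    ((1 ⊗ₖ P) * ((∑ j, ketBra (v j) ⊗ₖ u j) * (ρ ⊗ₖ g) * (∑ j, ketBra (v j) ⊗ₖ u j)ᴴ)).trace
      = ∑ j, (star (v j) ⬝ᵥ ρ *ᵥ v j) * (P * (u j * g * (u j)ᴴ)).trace := by
  have hsandwich : ∀ j k, (ketBra (v j) * ρ * ketBra (v k)).trace
      = if k = j then star (v j) ⬝ᵥ ρ *ᵥ v j else 0 := fun j k => by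
    rw [trace_mul_comm, ← Matrix.mul_assoc, ketBra_mul_ketBra hv]
    split_ifs with h
    · rw [h, trace_ketBra_mul]
    · simp
  simp only [conjTranspose_sum, conjTranspose_kronecker, conjTranspose_ketBra,
    Finset.mul_sum, Finset.sum_mul, ← mul_kronecker_mul, Matrix.one_mul, trace_sum,
    trace_kronecker, hsandwich, ite_mul, zero_mul, Finset.sum_ite_eq, Finset.mem_univ,
    if_true]

end OrthonormalBasis

lemma hadamard2_mul_diagonal_mul_hadamard2 (α β : ℂ) :
    hadamard2 * diagonal ![α, β] * hadamard2
      = !![(α + β) / 2, (α - β) / 2; (α - β) / 2, (α + β) / 2] := by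
  have hs : ((Real.sqrt 2 : ℂ))⁻¹ * ((Real.sqrt 2 : ℂ))⁻¹ = 1 / 2 := by
    rw [← mul_inv, ← Complex.ofReal_mul, Real.mul_self_sqrt zero_le_two]; norm_num
  simp only [hadamard2, diagonal_vec2, Matrix.smul_mul, Matrix.mul_smul, smul_smul, hs,
    mul_fin_two]
  ext i j
  fin_cases i <;> fin_cases j <;> simp <;> ring

lemma trace_projE0_mul_hadamard_conj {α β : ℂ} (hα : star α * α = 1) (hβ : star β * β = 1)
    (x : ℂ) :
    (projE0 * ((hadamard2 * diagonal ![α, β] * hadamard2) * !![x, 0; 0, 1 - x]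
        * (hadamard2 * diagonal ![α, β] * hadamard2)ᴴ)).trace
      = 1 / 2 * (1 + (2 * x - 1) * ((α * star β + β * star α) / 2)) := by
  rw [hadamard2_mul_diagonal_mul_hadamard2]
  simp only [trace, diag, mul_apply, Fin.sum_univ_two, conjTranspose_apply, projE0, of_apply,
    cons_val', cons_val_zero, cons_val_one, empty_val', cons_val_fin_one, star_add, star_sub,
    star_div₀, star_ofNat]
  linear_combination (1 / 4 : ℂ) * hα + (1 / 4 : ℂ) * hβ

lemma star_exp_ofReal_mul_I_mul_self (φ : ℝ) :
    star (Complex.exp (φ * Complex.I)) * Complex.exp (φ * Complex.I) = 1 := by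
  rw [Complex.star_def, ← Complex.exp_conj, ← Complex.exp_add]
  simp

lemma exp_ofReal_mul_I_mul_star_add_mul_star_div_two (φ θ : ℝ) :
    (Complex.exp (φ * Complex.I) * star (Complex.exp ((φ - θ : ℝ) * Complex.I))
      + Complex.exp ((φ - θ : ℝ) * Complex.I) * star (Complex.exp (φ * Complex.I))) / 2
      = (Real.cos θ : ℂ) := by
  simp only [Complex.star_def, ← Complex.exp_conj, ← Complex.exp_add, map_mul,
    Complex.conj_ofReal, Complex.conj_I, Complex.ofReal_cos, Complex.cos]
  push_cast
  ring_nf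

section Probe

variable {n : ℕ} {HS A : Matrix (Fin n) (Fin n) ℂ} {v : Fin n → Fin n → ℂ} {s a : Fin n → ℝ}

lemma H2mat_eq_sum_ketBra_kronecker
    (hv : ∀ j k, star (v j) ⬝ᵥ v k = if j = k then 1 else 0)
    (hvS : ∀ j, HS *ᵥ v j = (s j : ℂ) • v j) (hvA : ∀ j, A *ᵥ v j = (a j : ℂ) • v j) (δ : ℝ) :
    H2mat HS A δ = ∑ j, ketBra (v j) ⊗ₖ diagonal ![(s j : ℂ), s j + δ + a j] := by
  have hprobe : ∀ j, (s j : ℂ) • (1 : Matrix (Fin 2) (Fin 2) ℂ) + (δ : ℂ) • projE1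
      + (a j : ℂ) • projE1 = diagonal ![(s j : ℂ), s j + δ + a j] := fun j => by
    ext i k
    fin_cases i <;> fin_cases k <;> simp [projE1]
  rw [H2mat, eq_sum_smul_ketBra hv hvS, eq_sum_smul_ketBra hv hvA, ← sum_ketBra_eq_one hv]
  simp only [Matrix.sum_kronecker, smul_kronecker, ← kronecker_smul, ← Finset.sum_add_distrib,
    ← kronecker_add, hprobe]

lemma Umat_eq_sum_ketBra_kronecker
    (hv : ∀ j k, star (v j) ⬝ᵥ v k = if j = k then 1 else 0)
    (hvS : ∀ j, HS *ᵥ v j = (s j : ℂ) • v j) (hvA : ∀ j, A *ᵥ v j = (a j : ℂ) • v j)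
    (δ t : ℝ) :
    Umat HS A δ t = ∑ j, ketBra (v j) ⊗ₖ (hadamard2
      * diagonal ![Complex.exp ((-(s j * t) : ℝ) * Complex.I),
          Complex.exp ((-(s j * t) - (a j + δ) * t : ℝ) * Complex.I)] * hadamard2) := by
  have hphases : ∀ j, (fun k => Complex.exp
      (((-Complex.I * t) • ![(s j : ℂ), s j + δ + a j]) k))
      = ![Complex.exp ((-(s j * t) : ℝ) * Complex.I),
          Complex.exp ((-(s j * t) - (a j + δ) * t : ℝ) * Complex.I)] := fun j => by
    funext k
    fin_cases k <;> simp <;> ring_nf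
  rw [Umat, H2mat_eq_sum_ketBra_kronecker hv hvS hvA, Finset.smul_sum]
  simp only [← kronecker_smul, ← diagonal_smul]
  rw [exp_sum_ketBra_kronecker_diagonal hv]
  simp only [hphases, Finset.mul_sum, Finset.sum_mul, ← mul_kronecker_mul, Matrix.one_mul,
    Matrix.mul_one]

end Probe

theorem probe_probability_mixed_state_general {n : ℕ}
    (HS A : Matrix (Fin n) (Fin n) ℂ)
    (v : Fin n → (Fin n → ℂ)) (s a : Fin n → ℝ)
    (hortho : ∀ j k : Fin n, star (v j) ⬝ᵥ v k = if j = k then 1 else 0)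
    (hvS : ∀ j, HS.mulVec (v j) = (s j : ℂ) • v j)
    (hvA : ∀ j, A.mulVec (v j) = (a j : ℂ) • v j)
    (δ : ℝ)
    (ρS : Matrix (Fin n) (Fin n) ℂ)
    (hρtr : ρS.trace = 1)
    (aa : ℝ)
    (t : ℝ) :
    (((1 : Matrix (Fin n) (Fin n) ℂ) ⊗ₖ projE0
        * (Umat HS A δ t * (ρS ⊗ₖ !![(aa : ℂ), 0; 0, 1 - (aa : ℂ)])
            * (Umat HS A δ t)ᴴ)).trace
      = (1 / 2 : ℂ) * (1 + ((2 * aa - 1 : ℝ) : ℂ)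
          * ∑ j : Fin n, (star (v j) ⬝ᵥ ρS.mulVec (v j))
              * ((Real.cos ((a j + δ) * t) : ℝ) : ℂ))) := by
  rw [Umat_eq_sum_ketBra_kronecker hortho hvS hvA,
    trace_one_kronecker_mul_conj_sum_ketBra_kronecker hortho]
  simp only [trace_projE0_mul_hadamard_conj (star_exp_ofReal_mul_I_mul_self _)
    (star_exp_ofReal_mul_I_mul_self _), exp_ofReal_mul_I_mul_star_add_mul_star_div_two]
  rw [← sum_dotProduct_mulVec_eq_trace hortho ρS] at hρtr
  calc _ = 1 / 2 * (∑ j, star (v j) ⬝ᵥ ρS *ᵥ v j + ((2 * aa - 1 : ℝ) : ℂ)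
        * ∑ j, star (v j) ⬝ᵥ ρS *ᵥ v j * ((Real.cos ((a j + δ) * t) : ℝ) : ℂ)) := by
        simp only [Finset.mul_sum, ← Finset.sum_add_distrib]
        refine Finset.sum_congr rfl fun j _ => ?_
        push_cast
        ring
    _ = _ := by rw [hρtr]

/-- for commuting Hermitian `H_S`, `A` with orthonormal simultaneous
eigenbasis `v j` (`H_S v_j = s_j v_j`, `A v_j = a_j v_j`), probe Hamiltonian
`δ|e1⟩⟨e1|`, initial state `ρ0 = ρ_S ⊗ diag(a, 1-a)` (`ρ_S` a density matrix,
`a ∈ [0,1]`) and `ρ1(t) = U(t) ρ0 U(t)*` with `U(t) = (I ⊗ 𝗛) exp(-itH2) (I ⊗ 𝗛)`: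
`Tr((I ⊗ |e0⟩⟨e0|) ρ1(t)) = (1/2)(1 + (2a-1) Σ_j ⟨v_j, ρ_S v_j⟩ cos((a_j+δ)t))`. -/
theorem probe_probability_mixed_state {n : ℕ}
    (HS A : Matrix (Fin n) (Fin n) ℂ)
    (hHS : HS.IsHermitian) (hA : A.IsHermitian) (hcomm : A * HS = HS * A)
    (v : Fin n → (Fin n → ℂ)) (s a : Fin n → ℝ)
    (hortho : ∀ j k : Fin n, star (v j) ⬝ᵥ v k = if j = k then 1 else 0)
    (hvS : ∀ j, HS.mulVec (v j) = (s j : ℂ) • v j)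
    (hvA : ∀ j, A.mulVec (v j) = (a j : ℂ) • v j)
    (δ : ℝ)
    (ρS : Matrix (Fin n) (Fin n) ℂ)
    (hρ : ρS.PosSemidef) (hρtr : ρS.trace = 1)
    (aa : ℝ) (haa0 : 0 ≤ aa) (haa1 : aa ≤ 1)
    (t : ℝ) :
    (((1 : Matrix (Fin n) (Fin n) ℂ) ⊗ₖ projE0
        * (Umat HS A δ t * (ρS ⊗ₖ !![(aa : ℂ), 0; 0, 1 - (aa : ℂ)])
            * (Umat HS A δ t)ᴴ)).trace
      = (1 / 2 : ℂ) * (1 + ((2 * aa - 1 : ℝ) : ℂ)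
          * ∑ j : Fin n, (star (v j) ⬝ᵥ ρS.mulVec (v j))
              * ((Real.cos ((a j + δ) * t) : ℝ) : ℂ))) :=
  probe_probability_mixed_state_general HS A v s a hortho hvS hvA δ ρS hρtr aa t
end

section
/- Let H_1, …, H_k be n×n complex matrices and let H = Σ_{i=1}^k H_i. Then for every real t, the Trotter product converges: the sequence n ↦ (exp(−i H_1 t/n) · exp(−i H_2 t/n) ⋯ exp(−i H_k t/n))^n tends to exp(−i H t) as n → ∞. -/
/-!
Chernoff's argument. If `f 0 = 1` and `f' 0 = X` in a Banach algebra, then `f (1/n)` and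
`exp (X/n)` differ by `o(1/n)` and both have norm at most `1 + C/n`, so the telescoping bound
`‖aⁿ - bⁿ‖ ≤ n Mⁿ⁻¹ ‖a - b‖` gives `f (1/n)ⁿ - exp (X/n)ⁿ → 0`, while `exp (X/n)ⁿ = exp X`.
By the product rule, `s ↦ exp (s X₁) ⋯ exp (s Xₖ)` has derivative `X₁ + ⋯ + Xₖ` at `0`.
-/

open Filter Topology NormedSpace

theorem norm_pow_sub_pow_le {R : Type*} [SeminormedRing R] {a b : R} {M : ℝ}
    (ha : ‖a‖ ≤ M) (hb : ‖b‖ ≤ M) (n : ℕ) :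
    ‖a ^ n - b ^ n‖ ≤ n * M ^ (n - 1) * ‖a - b‖ := by
  cases n with
  | zero => simp
  | succ n =>
    simp only [Nat.cast_succ, Nat.add_sub_cancel]
    induction n with
    | zero => simp
    | succ n ih =>
      have hsplit : a ^ (n + 2) - b ^ (n + 2) =
          a * (a ^ (n + 1) - b ^ (n + 1)) + (a - b) * b ^ (n + 1) := by
        rw [pow_succ' a, pow_succ' b, mul_sub, sub_mul]; abel
      have hbpow : ‖b ^ (n + 1)‖ ≤ M ^ (n + 1) :=
        (norm_pow_le' b n.succ_pos).trans (pow_le_pow_left₀ (norm_nonneg b) hb _)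
      have hM : 0 ≤ M := (norm_nonneg a).trans ha
      calc ‖a ^ (n + 1 + 1) - b ^ (n + 1 + 1)‖
          ≤ ‖a‖ * ‖a ^ (n + 1) - b ^ (n + 1)‖ + ‖a - b‖ * ‖b ^ (n + 1)‖ := by
            rw [hsplit]
            exact (norm_add_le _ _).trans (add_le_add (norm_mul_le _ _) (norm_mul_le _ _))
        _ ≤ M * ((n + 1) * M ^ n * ‖a - b‖) + ‖a - b‖ * M ^ (n + 1) := by gcongr
        _ = ((n + 1 : ℕ) + 1) * M ^ (n + 1) * ‖a - b‖ := by push_cast; ring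

theorem one_add_div_pow_pred_le_exp {C : ℝ} (hC : 0 ≤ C) (n : ℕ) :
    (1 + C / n) ^ (n - 1) ≤ Real.exp C := by
  rcases eq_or_ne n 0 with rfl | hn
  · simpa using Real.one_le_exp hC
  calc (1 + C / n) ^ (n - 1) ≤ (1 + C / n) ^ n :=
        pow_le_pow_right₀ (le_add_of_nonneg_right (by positivity)) (Nat.sub_le n 1)
    _ ≤ Real.exp (C / n) ^ n := by
        gcongr
        linarith [Real.add_one_le_exp (C / n)]
    _ = Real.exp C := by rw [← Real.exp_nat_mul, mul_div_cancel₀ _ (by exact_mod_cast hn)]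

section BanachAlgebra

variable {𝕂 𝔸 : Type*} [RCLike 𝕂] [NormedRing 𝔸] [NormedAlgebra 𝕂 𝔸]

theorem HasDerivAt.tendsto_natCast_smul_sub {E : Type*} [NormedAddCommGroup E]
    [NormedSpace 𝕂 E] {f : 𝕂 → E} {f' : E} (hf : HasDerivAt f f' 0) :
    Tendsto (fun n : ℕ => (n : 𝕂) • (f (n : 𝕂)⁻¹ - f 0)) atTop (𝓝 f') := by
  have hinv : Tendsto (fun n : ℕ => (n : 𝕂)⁻¹) atTop (𝓝[≠] 0) :=
    tendsto_nhdsWithin_iff.2 ⟨tendsto_inv_atTop_nhds_zero_nat,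
      (eventually_ne_atTop 0).mono fun n hn => by simpa using hn⟩
  simpa [Function.comp_def] using (hasDerivAt_iff_tendsto_slope_zero.1 hf).comp hinv

theorem norm_le_one_add_norm_natCast_smul_sub_one_div [NormOneClass 𝔸] (a : 𝔸) {n : ℕ}
    (hn : n ≠ 0) : ‖a‖ ≤ 1 + ‖(n : 𝕂) • (a - 1)‖ / n := by
  rw [norm_smul, RCLike.norm_natCast, mul_div_cancel_left₀ _ (by exact_mod_cast hn)]
  simpa using norm_le_norm_add_norm_sub' a 1

theorem tendsto_pow_sub_pow_of_tendsto_natCast_smul_sub_one [NormOneClass 𝔸] {a b : ℕ → 𝔸}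
    {X : 𝔸} (ha : Tendsto (fun n : ℕ => (n : 𝕂) • (a n - 1)) atTop (𝓝 X))
    (hb : Tendsto (fun n : ℕ => (n : 𝕂) • (b n - 1)) atTop (𝓝 X)) :
    Tendsto (fun n => a n ^ n - b n ^ n) atTop (𝓝 0) := by
  set C := ‖X‖ + 1
  have hbound : ∀ {c : ℕ → 𝔸}, Tendsto (fun n : ℕ => (n : 𝕂) • (c n - 1)) atTop (𝓝 X) →
      ∀ᶠ n : ℕ in atTop, ‖c n‖ ≤ 1 + C / n := by
    intro c hc
    filter_upwards [hc.norm.eventually (gt_mem_nhds (lt_add_one ‖X‖)), eventually_ne_atTop 0]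
      with n hn hn0
    exact (norm_le_one_add_norm_natCast_smul_sub_one_div (c n) hn0).trans (by gcongr)
  have hdiff : Tendsto (fun n : ℕ => (n : 𝕂) • (a n - b n)) atTop (𝓝 0) := by
    simpa [smul_sub] using ha.sub hb
  refine squeeze_zero_norm' ?_ (by simpa using hdiff.norm.const_mul (Real.exp C))
  filter_upwards [hbound ha, hbound hb] with n han hbn
  calc ‖a n ^ n - b n ^ n‖ ≤ n * (1 + C / n) ^ (n - 1) * ‖a n - b n‖ :=
        norm_pow_sub_pow_le han hbn n
    _ = (1 + C / n) ^ (n - 1) * ‖(n : 𝕂) • (a n - b n)‖ := by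
        rw [norm_smul, RCLike.norm_natCast]; ring
    _ ≤ Real.exp C * ‖(n : 𝕂) • (a n - b n)‖ := by
        gcongr
        exact one_add_div_pow_pred_le_exp (by positivity) n

variable [CompleteSpace 𝔸]

theorem exp_inv_natCast_smul_pow (X : 𝔸) {n : ℕ} (hn : n ≠ 0) :
    exp ((n : 𝕂)⁻¹ • X) ^ n = exp X := by
  let _ : NormedAlgebra ℚ 𝔸 := NormedAlgebra.restrictScalars ℚ 𝕂 𝔸
  rw [← exp_nsmul, ← Nat.cast_smul_eq_nsmul 𝕂, smul_smul, mul_inv_cancel₀ (by exact_mod_cast hn),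
    one_smul]

theorem tendsto_pow_of_hasDerivAt_zero [NormOneClass 𝔸] {f : 𝕂 → 𝔸} {X : 𝔸}
    (hf : HasDerivAt f X 0) (hf0 : f 0 = 1) :
    Tendsto (fun n : ℕ => f (n : 𝕂)⁻¹ ^ n) atTop (𝓝 (exp X)) := by
  have hexp : HasDerivAt (fun s : 𝕂 => exp (s • X)) X 0 := by
    simpa using hasDerivAt_exp_smul_const X (0 : 𝕂)
  have hclose := tendsto_pow_sub_pow_of_tendsto_natCast_smul_sub_one
    (by simpa [hf0] using hf.tendsto_natCast_smul_sub)
    (by simpa using hexp.tendsto_natCast_smul_sub)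
  have hexp_pow : ∀ᶠ n : ℕ in atTop, exp X = exp ((n : 𝕂)⁻¹ • X) ^ n :=
    (eventually_ne_atTop 0).mono fun n hn => (exp_inv_natCast_smul_pow X hn).symm
  simpa using hclose.add (tendsto_const_nhds.congr' hexp_pow)

theorem hasDerivAt_list_prod_exp_smul_zero (l : List 𝔸) :
    HasDerivAt (fun s : 𝕂 => (l.map fun x => exp (s • x)).prod) l.sum 0 := by
  induction l with
  | nil => simpa using hasDerivAt_const (0 : 𝕂) (1 : 𝔸)
  | cons x l ih =>
    exact ((hasDerivAt_exp_smul_const x (0 : 𝕂)).mul ih).congr_deriv (by simp)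

theorem tendsto_list_prod_exp_inv_natCast_smul_pow [NormOneClass 𝔸] (l : List 𝔸) :
    Tendsto (fun n : ℕ => (l.map fun x => exp ((n : 𝕂)⁻¹ • x)).prod ^ n) atTop
      (𝓝 (exp l.sum)) :=
  tendsto_pow_of_hasDerivAt_zero (hasDerivAt_list_prod_exp_smul_zero l) (by simp)

end BanachAlgebra

/-- Trotter product formula: for `n×n` complex matrices `H_1, …, H_k` with
sum `H` and any real `t`, the sequence
`(exp(-iH_1 t/n) ⋯ exp(-iH_k t/n))^n` converges to `exp(-iHt)` as `n → ∞`. -/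
theorem trotter_product_formula {N k : ℕ}
    (H : Fin k → Matrix (Fin N) (Fin N) ℂ) (t : ℝ) :
    Filter.Tendsto
      (fun n : ℕ =>
        (((List.finRange k).map
          (fun i => NormedSpace.exp
            ((-(Complex.I) * (t : ℂ) / (n : ℂ)) • H i))).prod) ^ n)
      Filter.atTop
      (nhds (NormedSpace.exp ((-(Complex.I) * (t : ℂ)) • ∑ i : Fin k, H i))) := by
  rcases isEmpty_or_nonempty (Fin N) with hN | hN
  · exact tendsto_const_nhds.congr fun n => Subsingleton.elim _ _
  -- The operator norm induced by the sup norm; `‖1‖ = 1` needs `Fin N` nonempty.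
  let _ := Matrix.linftyOpNormedRing (n := Fin N) (α := ℂ)
  let _ := Matrix.linftyOpNormedAlgebra (n := Fin N) (R := ℂ) (α := ℂ)
  have _ := Matrix.linfty_opNormOneClass (n := Fin N) (α := ℂ)
  set c : ℂ := -Complex.I * t
  have h := tendsto_list_prod_exp_inv_natCast_smul_pow (𝕂 := ℂ) ((List.finRange k).map (c • H ·))
  rw [← Fin.sum_univ_def, ← Finset.smul_sum] at h
  simp only [List.map_map, Function.comp_def, smul_smul, ← div_eq_inv_mul] at h
  exact h
end
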